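/- arXiv:1701.00901 — 3 statements merged into one kernel-verified Lean document; each statement's English description precedes it below -/
import Mathlib

section
/- Let n ≥ 1, α > -1, and φ(x) = x‖x‖^α. Then for every nonnegative measurable function g : ℝⁿ → ℝ, ∫_{ℝⁿ} g(φ(x)) (1+α) ‖x‖^{αn} dx = ∫_{ℝⁿ} g(y) dy. -/
/-!
The map `φ x = ‖x‖ ^ α • x` is a bijection of `ℝⁿ` for `α ≠ -1`, with inverse the map of
exponent `(1 + α)⁻¹ - 1`. Away from the origin its derivative is
`‖x‖ ^ α • (id + (α / ‖x‖ ^ 2) • ⟪x, ·⟫ • x)`, a multiple of a rank-one perturbation of the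
identity, so by the matrix determinant lemma its Jacobian is `(1 + α) * ‖x‖ ^ (α * n)`. The
formula is then the change of variables theorem on `ℝⁿ \ {0}`, the origin being a null set.
-/

open MeasureTheory Module
open scoped ENNReal

theorem LinearMap.det_id_add_smulRight {R M : Type*} [CommRing R] [AddCommGroup M] [Module R M]
    [Module.Free R M] [Module.Finite R M] (f : M →ₗ[R] R) (v : M) :
    LinearMap.det (LinearMap.id + f.smulRight v) = 1 + f v := by
  classical
  let b := Module.Free.chooseBasis R M
  have hmat : LinearMap.toMatrix b b (LinearMap.id + f.smulRight v) =
      1 + Matrix.replicateCol Unit (b.repr v) * Matrix.replicateRow Unit (fun j => f (b j)) := by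
    ext i j
    simp [LinearMap.toMatrix_apply, Matrix.one_apply, Matrix.mul_apply, Finsupp.single_apply,
      eq_comm, mul_comm]
  rw [← LinearMap.det_toMatrix b, hmat, Matrix.det_one_add_replicateCol_mul_replicateRow,
    dotProduct]
  congr 1
  calc ∑ i, f (b i) * b.repr v i = f (∑ i, b.repr v i • b i) := by
        simp only [map_sum, map_smul, smul_eq_mul, mul_comm]
    _ = f v := by rw [b.sum_repr]

section NormedSpace

variable {E : Type*} [NormedAddCommGroup E] [NormedSpace ℝ E] {α : ℝ}

noncomputable def radialRpow (α : ℝ) (x : E) : E := ‖x‖ ^ α • x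

@[simp]
lemma radialRpow_zero_right (α : ℝ) : radialRpow α (0 : E) = 0 := by
  simp [radialRpow]

@[simp]
lemma radialRpow_zero_left (x : E) : radialRpow 0 x = x := by
  simp [radialRpow]

lemma norm_radialRpow (hα : α + 1 ≠ 0) (x : E) : ‖radialRpow α x‖ = ‖x‖ ^ (α + 1) := by
  rcases eq_or_ne x 0 with rfl | hx
  · simp [Real.zero_rpow hα]
  · rw [radialRpow, norm_smul, Real.norm_of_nonneg (by positivity),
      Real.rpow_add_one (norm_ne_zero_iff.mpr hx)]

lemma radialRpow_radialRpow (hα : α + 1 ≠ 0) (β : ℝ) (x : E) :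
    radialRpow β (radialRpow α x) = radialRpow ((α + 1) * (β + 1) - 1) x := by
  rcases eq_or_ne x 0 with rfl | hx
  · simp
  have hx0 : 0 < ‖x‖ := norm_pos_iff.mpr hx
  rw [radialRpow, norm_radialRpow hα, radialRpow, radialRpow, smul_smul,
    ← Real.rpow_mul hx0.le, ← Real.rpow_add hx0]
  ring_nf

lemma bijective_radialRpow (hα : α + 1 ≠ 0) : Function.Bijective (radialRpow α : E → E) := by
  have hβ : (α + 1)⁻¹ - 1 + 1 ≠ 0 := by simpa using hα
  refine Function.bijective_iff_has_inverse.mpr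
    ⟨radialRpow ((α + 1)⁻¹ - 1), fun x => ?_, fun x => ?_⟩
  · rw [radialRpow_radialRpow hα, mul_comm, sub_add_cancel, inv_mul_cancel₀ hα, sub_self,
      radialRpow_zero_left]
  · rw [radialRpow_radialRpow hβ, sub_add_cancel, inv_mul_cancel₀ hα, sub_self,
      radialRpow_zero_left]

end NormedSpace

section InnerProductSpace

variable {E : Type*} [NormedAddCommGroup E] [InnerProductSpace ℝ E] {x : E}

theorem hasFDerivAt_norm_rpow_of_ne_zero (hx : x ≠ 0) (p : ℝ) :
    HasFDerivAt (fun y : E => ‖y‖ ^ p) ((p * ‖x‖ ^ (p - 2)) • innerSL ℝ x) x := by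
  have hsq : HasFDerivAt (fun y : E => (‖y‖ ^ 2) ^ (p / 2))
      ((p / 2 * (‖x‖ ^ 2) ^ (p / 2 - 1)) • (2 • innerSL ℝ x)) x :=
    (hasStrictFDerivAt_norm_sq x).hasFDerivAt.rpow_const (by simp [hx])
  convert hsq using 1
  · ext y
    rw [← Real.rpow_natCast_mul (norm_nonneg y)]
    ring_nf
  · rw [← Real.rpow_natCast_mul (norm_nonneg x), ← Nat.cast_smul_eq_nsmul ℝ, smul_smul]
    ring_nf

theorem hasFDerivAt_radialRpow (hx : x ≠ 0) (α : ℝ) :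
    HasFDerivAt (radialRpow α)
      (‖x‖ ^ α • ContinuousLinearMap.id ℝ E + ((α * ‖x‖ ^ (α - 2)) • innerSL ℝ x).smulRight x)
      x :=
  (hasFDerivAt_norm_rpow_of_ne_zero hx α).smul (hasFDerivAt_id x)

theorem det_fderiv_radialRpow [FiniteDimensional ℝ E] (hx : x ≠ 0) (α : ℝ) :
    (fderiv ℝ (radialRpow α) x).det = (1 + α) * ‖x‖ ^ (α * finrank ℝ E) := by
  have hx0 : 0 < ‖x‖ := norm_pos_iff.mpr hx
  have hfactor : ((‖x‖ ^ α • ContinuousLinearMap.id ℝ E +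
      ((α * ‖x‖ ^ (α - 2)) • innerSL ℝ x).smulRight x : E →L[ℝ] E) : E →ₗ[ℝ] E) =
      ‖x‖ ^ α • (LinearMap.id +
        (((α / ‖x‖ ^ 2) • innerSL ℝ x : E →L[ℝ] ℝ) : E →ₗ[ℝ] ℝ).smulRight x) := by
    ext y
    simp only [ContinuousLinearMap.toLinearMap_add, ContinuousLinearMap.toLinearMap_smul,
      LinearMap.add_apply, LinearMap.smul_apply, ContinuousLinearMap.coe_coe,
      ContinuousLinearMap.id_apply, ContinuousLinearMap.smulRight_apply, LinearMap.id_apply,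
      LinearMap.smulRight_apply, FunLike.coe_smul, Pi.smul_apply, innerSL_apply_apply,
      smul_eq_mul, smul_add, smul_smul, Real.rpow_sub hx0, Real.rpow_two]
    ring_nf
  have hcoef : α / ‖x‖ ^ 2 * inner ℝ x x = α := by
    rw [real_inner_self_eq_norm_sq]
    field_simp
  rw [(hasFDerivAt_radialRpow hx α).fderiv, ContinuousLinearMap.det, hfactor, LinearMap.det_smul,
    LinearMap.det_id_add_smulRight]
  simp only [ContinuousLinearMap.coe_coe, FunLike.coe_smul, Pi.smul_apply, innerSL_apply_apply,
    smul_eq_mul, hcoef, Real.rpow_mul_natCast hx0.le]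
  ring

theorem lintegral_jacobian_mul_comp_radialRpow [FiniteDimensional ℝ E] [Nontrivial E]
    [MeasurableSpace E] [BorelSpace E] (μ : Measure E) [μ.IsAddHaarMeasure] {α : ℝ}
    (hα : -1 < α) (g : E → ℝ≥0∞) :
    ∫⁻ x, ENNReal.ofReal ((1 + α) * ‖x‖ ^ (α * finrank ℝ E)) * g (radialRpow α x) ∂μ =
      ∫⁻ y, g y ∂μ := by
  have hbij : Function.Bijective (radialRpow α : E → E) := bijective_radialRpow (by linarith)
  have himage : radialRpow α '' {(0 : E)}ᶜ = {0}ᶜ := by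
    rw [Set.image_compl_eq hbij, Set.image_singleton, radialRpow_zero_right]
  have hchange := lintegral_image_eq_lintegral_abs_det_fderiv_mul μ
    (measurableSet_singleton (0 : E)).compl
    (fun x hx => (hasFDerivAt_radialRpow hx α).differentiableAt.hasFDerivAt.hasFDerivWithinAt)
    hbij.injective.injOn g
  rw [himage, restrict_compl_singleton] at hchange
  rw [hchange, ← restrict_compl_singleton (μ := μ) 0]
  refine setLIntegral_congr_fun (measurableSet_singleton 0).compl fun x hx => ?_
  rw [det_fderiv_radialRpow hx, abs_of_nonneg (mul_nonneg (by linarith) (by positivity))]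

end InnerProductSpace

theorem stmt11_general (n : ℕ) (hn : 1 ≤ n) (α : ℝ) (hα : -1 < α)
    (g : EuclideanSpace ℝ (Fin n) → ℝ) :
    ∫⁻ x, ENNReal.ofReal (g (‖x‖ ^ α • x) * ((1 + α) * ‖x‖ ^ (α * n))) =
      ∫⁻ y, ENNReal.ofReal (g y) := by
  have : Nontrivial (EuclideanSpace ℝ (Fin n)) :=
    Module.nontrivial_of_finrank_pos (R := ℝ) (by rwa [finrank_euclideanSpace_fin])
  have hchange :=
    lintegral_jacobian_mul_comp_radialRpow volume hα (fun y => ENNReal.ofReal (g y))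
  rw [finrank_euclideanSpace_fin] at hchange
  refine (lintegral_congr fun x => ?_).trans hchange
  rw [ENNReal.ofReal_mul' (mul_nonneg (by linarith) (by positivity)), mul_comm]
  rfl

/-- change of variables for `φ(x) = x‖x‖^α`: for every nonnegative
measurable `g`, `∫ g(φ x) (1+α)‖x‖^(αn) dx = ∫ g(y) dy`. -/
theorem stmt11 (n : ℕ) (hn : 1 ≤ n) (α : ℝ) (hα : -1 < α)
    (g : EuclideanSpace ℝ (Fin n) → ℝ) (hg : Measurable g) (hg0 : ∀ y, 0 ≤ g y) :
    ∫⁻ x, ENNReal.ofReal (g (‖x‖ ^ α • x) * ((1 + α) * ‖x‖ ^ (α * n))) =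
      ∫⁻ y, ENNReal.ofReal (g y) :=
  stmt11_general n hn α hα g
end

section
/- Let n ≥ 1 and α > -1. For every p ∈ [1, ∞) and every measurable f : ℝⁿ → ℝ, ∫_{ℝⁿ} |f(x‖x‖^α)|^p (1+α) ‖x‖^{αn} dx = ∫_{ℝⁿ} |f(y)|^p dy. In particular, the weighted L^p norm of f∘φ with weight (1+α)‖x‖^{αn} equals the unweighted L^p norm of f. -/
/-! In polar coordinates `x = r • θ` the Haar measure is `σ ⊗ r ^ (n - 1) dr` and
`φ` acts only on the radius, as `s = r ^ (1 + α)`. The weight `(1 + α) ‖x‖ ^ (α n)` is exactly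
what turns `r ^ (n - 1) dr` into `s ^ (n - 1) ds` under this substitution. -/

open MeasureTheory Set Metric Module
open scoped ENNReal

theorem lintegral_comp_rpow_Ioi_of_pos (g : ℝ → ℝ≥0∞) {p : ℝ} (hp : 0 < p) :
    ∫⁻ x in Ioi 0, ENNReal.ofReal (p * x ^ (p - 1)) * g (x ^ p) = ∫⁻ y in Ioi 0, g y := by
  have himage : (· ^ p) '' Ioi 0 = Ioi (0 : ℝ) := by
    ext y
    refine ⟨fun ⟨x, hx, hxy⟩ ↦ hxy ▸ Real.rpow_pos_of_pos hx p, fun hy ↦ ?_⟩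
    exact ⟨y ^ p⁻¹, Real.rpow_pos_of_pos hy _, by simp [← Real.rpow_mul hy.le, hp.ne']⟩
  conv_rhs => rw [← himage]
  rw [lintegral_image_eq_lintegral_abs_deriv_mul measurableSet_Ioi
    (fun x hx ↦ (Real.hasDerivAt_rpow_const (Or.inl (mem_Ioi.mp hx).ne')).hasDerivWithinAt)
    ((Real.rpow_left_injOn hp.ne').mono Ioi_subset_Ici_self)]
  refine setLIntegral_congr_fun measurableSet_Ioi fun x hx ↦ ?_
  rw [abs_of_nonneg (by have := mem_Ioi.mp hx; positivity)]

section HaarMeasure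

variable {E : Type*} [NormedAddCommGroup E] [NormedSpace ℝ E] [MeasurableSpace E] [BorelSpace E]
  [FiniteDimensional ℝ E] (μ : Measure E) [μ.IsAddHaarMeasure]

theorem lintegral_eq_lintegral_toSphere_lintegral_Ioi [Nontrivial E] {F : E → ℝ≥0∞}
    (hF : Measurable F) :
    ∫⁻ x, F x ∂μ = ∫⁻ θ : sphere (0 : E) 1,
      (∫⁻ r in Ioi (0 : ℝ), ENNReal.ofReal (r ^ (finrank ℝ E - 1)) * F (r • θ.1)) ∂μ.toSphere := by
  have hFpolar : Measurable fun z : sphere (0 : E) 1 × Ioi (0 : ℝ) ↦ F (z.2.1 • z.1.1) :=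
    hF.comp (by fun_prop)
  have hpolar : ∫⁻ x, F x ∂μ = ∫⁻ z, F (z.2.1 • z.1.1)
      ∂μ.toSphere.prod (Measure.volumeIoiPow (finrank ℝ E - 1)) := by
    conv_lhs => rw [← restrict_compl_singleton (μ := μ) 0,
      ← lintegral_subtype_comap (MeasurableSet.singleton 0).compl]
    rw [← μ.measurePreserving_homeomorphUnitSphereProd.lintegral_comp_emb
      (Homeomorph.measurableEmbedding _)]
    refine lintegral_congr fun x ↦ ?_
    simp [homeomorphUnitSphereProd, smul_inv_smul₀ (norm_ne_zero_iff.2 x.2)]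
  rw [hpolar, lintegral_prod _ hFpolar.aemeasurable]
  refine lintegral_congr fun θ ↦ ?_
  have hFθ : Measurable fun r : Ioi (0 : ℝ) ↦ F (r.1 • θ.1) := hF.comp (by fun_prop)
  rw [Measure.volumeIoiPow, lintegral_withDensity_eq_lintegral_mul _ (by fun_prop) hFθ,
    ← lintegral_subtype_comap measurableSet_Ioi]
  rfl

theorem lintegral_comp_norm_rpow_smul_mul [Nontrivial E] {α : ℝ} (hα : -1 < α) {g : E → ℝ≥0∞}
    (hg : Measurable g) :
    ∫⁻ x, g (‖x‖ ^ α • x) * ENNReal.ofReal ((1 + α) * ‖x‖ ^ (α * finrank ℝ E)) ∂μ =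
      ∫⁻ x, g x ∂μ := by
  have hα₁ : 0 < 1 + α := by linarith
  obtain ⟨k, hk⟩ := Nat.exists_eq_add_one.2 (finrank_pos (R := ℝ) (M := E))
  rw [lintegral_eq_lintegral_toSphere_lintegral_Ioi μ (by fun_prop),
    lintegral_eq_lintegral_toSphere_lintegral_Ioi μ hg]
  refine lintegral_congr fun θ ↦ ?_
  conv_rhs => rw [← lintegral_comp_rpow_Ioi_of_pos _ hα₁]
  refine setLIntegral_congr_fun measurableSet_Ioi fun r (hr : 0 < r) ↦ ?_
  have hnorm : ‖r • θ.1‖ = r := by simp [norm_smul, hr.le]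
  have hweight : r ^ k * ((1 + α) * r ^ (α * (k + 1 : ℕ))) =
      (1 + α) * r ^ (1 + α - 1) * (r ^ (1 + α)) ^ k := by
    rw [Real.rpow_mul hr.le, Real.rpow_natCast, Real.rpow_add hr, Real.rpow_one,
      add_sub_cancel_left]
    ring
  rw [hnorm, smul_smul, ← Real.rpow_add_one hr.ne', add_comm α, hk, Nat.add_sub_cancel,
    mul_comm (g _), ← mul_assoc, ← mul_assoc, ← ENNReal.ofReal_mul (by positivity),
    ← ENNReal.ofReal_mul (by positivity), hweight]

end HaarMeasure

theorem stmt12_general (n : ℕ) (hn : 1 ≤ n) (α : ℝ) (hα : -1 < α)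
    (p : ℝ)
    (f : EuclideanSpace ℝ (Fin n) → ℝ) (hf : Measurable f) :
    ∫⁻ x, ENNReal.ofReal (|f (‖x‖ ^ α • x)| ^ p * ((1 + α) * ‖x‖ ^ (α * n))) =
      ∫⁻ y, ENNReal.ofReal (|f y| ^ p) := by
  have : Nonempty (Fin n) := ⟨⟨0, hn⟩⟩
  have hweighted := lintegral_comp_norm_rpow_smul_mul volume hα
    (g := fun y ↦ ENNReal.ofReal (|f y| ^ p)) (by fun_prop)
  rw [finrank_euclideanSpace_fin] at hweighted
  simpa only [ENNReal.ofReal_mul (Real.rpow_nonneg (abs_nonneg _) p)] using hweighted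

/-- the weighted `L^p` norm of `f ∘ φ` with weight `(1+α)‖x‖^(αn)`
equals the unweighted `L^p` norm of `f`, for `φ(x) = x‖x‖^α`, `α > -1`. -/
theorem stmt12 (n : ℕ) (hn : 1 ≤ n) (α : ℝ) (hα : -1 < α)
    (p : ℝ) (hp : 1 ≤ p)
    (f : EuclideanSpace ℝ (Fin n) → ℝ) (hf : Measurable f) :
    ∫⁻ x, ENNReal.ofReal (|f (‖x‖ ^ α • x)| ^ p * ((1 + α) * ‖x‖ ^ (α * n))) =
      ∫⁻ y, ENNReal.ofReal (|f y| ^ p) :=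
  stmt12_general n hn α hα p f hf
end

section
/- Suppose the Gagliardo–Nirenberg inequality ‖f‖_{L^r(ℝⁿ)} ≤ M ‖f‖_{L^s(ℝⁿ)}^{1-t} ‖∇f‖_{L^p(ℝⁿ)}^{t} holds for all f ∈ C_c^∞(ℝⁿ) with constant M, where 1 ≤ p < n, 0 ≤ t ≤ 1, and 1/r = (1-t)/s + t(n-p)/(np). Then for every α with -1 < α < 0 and all f ∈ C_c^∞(ℝⁿ \ {0}), (∫ |f|^r ‖x‖^{αn} dx)^{1/r} ≤ (1+α)^{t/n - t} M (∫ |f|^s ‖x‖^{αn} dx)^{(1-t)/s} (∫ ‖∇f‖^p ‖x‖^{α(n-p)} dx)^{t/p}. -/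
open MeasureTheory Set

namespace CKN

noncomputable def psi (n : ℕ) (β : ℝ) (y : EuclideanSpace ℝ (Fin n)) : EuclideanSpace ℝ (Fin n) :=
  ‖y‖ ^ β • y

noncomputable def Dmap (n : ℕ) (β : ℝ) (y : EuclideanSpace ℝ (Fin n)) :
    EuclideanSpace ℝ (Fin n) →L[ℝ] EuclideanSpace ℝ (Fin n) :=
  ‖y‖ ^ β • ContinuousLinearMap.id ℝ _ + ((β * ‖y‖ ^ (β - 2)) • innerSL ℝ y).smulRight y

lemma Dmap_apply (n : ℕ) (β : ℝ) (y v : EuclideanSpace ℝ (Fin n)) :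
    Dmap n β y v = ‖y‖ ^ β • v + (β * ‖y‖ ^ (β - 2) * (inner ℝ y v : ℝ)) • y := by
  simp only [Dmap, ContinuousLinearMap.add_apply, ContinuousLinearMap.smul_apply,
    ContinuousLinearMap.coe_id', id_eq, ContinuousLinearMap.smulRight_apply,
    innerSL_apply_apply, smul_eq_mul, mul_assoc]

lemma psi_zero (n : ℕ) {β : ℝ} (hβ : β ≠ 0) : psi n β 0 = 0 := by
  simp [psi]

lemma norm_psi (n : ℕ) {β : ℝ} (hβ : 0 < β) (y : EuclideanSpace ℝ (Fin n)) :
    ‖psi n β y‖ = ‖y‖ ^ (β + 1) := by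
  rcases eq_or_ne y 0 with rfl | hy
  · simp [psi, Real.zero_rpow hβ.ne', Real.zero_rpow (by linarith : β + 1 ≠ 0)]
  · have h0 : (0:ℝ) < ‖y‖ := norm_pos_iff.2 hy
    rw [psi, norm_smul, Real.norm_rpow_of_nonneg (norm_nonneg y), Real.norm_eq_abs,
      abs_of_nonneg (norm_nonneg y), Real.rpow_add_one h0.ne']

lemma psi_smul_eq (n : ℕ) {β δ : ℝ} (hδ : (1 + δ) * β + δ = 0)
    {x : EuclideanSpace ℝ (Fin n)} (hx : x ≠ 0) :
    psi n β (‖x‖ ^ δ • x) = x := by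
  have h0 : (0:ℝ) < ‖x‖ := norm_pos_iff.2 hx
  have hnorm : ‖(‖x‖ ^ δ • x)‖ = ‖x‖ ^ (1 + δ) := by
    rw [norm_smul, Real.norm_rpow_of_nonneg (norm_nonneg x), Real.norm_eq_abs,
      abs_of_nonneg (norm_nonneg x), add_comm, Real.rpow_add_one h0.ne']
  rw [psi, hnorm, smul_smul, ← Real.rpow_mul (norm_nonneg x) (1+δ) β,
    ← Real.rpow_add h0]
  rw [show (1 + δ) * β + δ = 0 from hδ, Real.rpow_zero, one_smul]

lemma injOn_psi (n : ℕ) {β : ℝ} (hβ : 0 < β) :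
    InjOn (psi n β) {(0 : EuclideanSpace ℝ (Fin n))}ᶜ := by
  intro y hy z hz h
  have hy0 : (0:ℝ) < ‖y‖ := norm_pos_iff.2 hy
  have hz0 : (0:ℝ) < ‖z‖ := norm_pos_iff.2 hz
  have hnorm : ‖y‖ = ‖z‖ := by
    have := congrArg norm h
    rw [norm_psi n hβ, norm_psi n hβ] at this
    exact Real.rpow_left_injOn (by linarith : β + 1 ≠ 0) (le_of_lt hy0) (le_of_lt hz0) this
  have : ‖y‖ ^ β • y = ‖y‖ ^ β • z := by
    simpa [psi, hnorm] using h
  have hne : ‖y‖ ^ β ≠ 0 := (Real.rpow_pos_of_pos hy0 β).ne'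
  exact smul_right_injective _ hne this

lemma image_psi (n : ℕ) {β : ℝ} (hβ : 0 < β) :
    psi n β '' {(0 : EuclideanSpace ℝ (Fin n))}ᶜ = {(0 : EuclideanSpace ℝ (Fin n))}ᶜ := by
  apply Subset.antisymm
  · rintro _ ⟨y, hy, rfl⟩
    have hy0 : (0:ℝ) < ‖y‖ := norm_pos_iff.2 hy
    simp only [mem_compl_iff, mem_singleton_iff] at *
    intro h
    have hpos := Real.rpow_pos_of_pos hy0 (β + 1)
    have heq := congrArg norm h
    rw [norm_psi n hβ, norm_zero] at heq
    exact absurd heq hpos.ne'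
  · intro x hx
    simp only [mem_compl_iff, mem_singleton_iff] at hx
    refine ⟨‖x‖ ^ (-β/(1+β)) • x, ?_, ?_⟩
    · simp only [mem_compl_iff, mem_singleton_iff]
      intro h
      apply hx
      have h0 : (0:ℝ) < ‖x‖ := norm_pos_iff.2 hx
      have : ‖x‖ ^ (-β/(1+β)) ≠ 0 := (Real.rpow_pos_of_pos h0 _).ne'
      simpa [smul_eq_zero, this] using h
    · exact psi_smul_eq n (by field_simp; ring) hx

lemma hasFDerivAt_psi (n : ℕ) (β : ℝ) {y : EuclideanSpace ℝ (Fin n)} (hy : y ≠ 0) :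
    HasFDerivAt (psi n β) (Dmap n β y) y := by
  have hy0 : (0:ℝ) < ‖y‖ := norm_pos_iff.2 hy
  have hsq : (0:ℝ) < ‖y‖^2 := by positivity
  have e : ∀ z : EuclideanSpace ℝ (Fin n), ((‖z‖:ℝ)^2)^(β/2) = ‖z‖^β := fun z => by
    rw [← Real.rpow_natCast ‖z‖ 2, ← Real.rpow_mul (norm_nonneg z)]; congr 1; ring
  have e2 : ((‖y‖:ℝ)^2)^(β/2-1) = ‖y‖^(β-2) := by
    rw [← Real.rpow_natCast ‖y‖ 2, ← Real.rpow_mul (norm_nonneg y)]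
    ring_nf
  have h1 : HasFDerivAt (fun z : EuclideanSpace ℝ (Fin n) => ‖z‖^2) (2 • (innerSL ℝ y)) y :=
    (hasStrictFDerivAt_norm_sq y).hasFDerivAt
  have h2 : HasFDerivAt (fun z : EuclideanSpace ℝ (Fin n) => (‖z‖^2)^(β/2))
      ((β/2 * (‖y‖^2)^(β/2-1)) • (2 • (innerSL ℝ y))) y :=
    h1.rpow_const (Or.inl hsq.ne')
  have h3 := h2.smul (hasFDerivAt_id y)
  simp only [id_eq] at h3
  have hfun : (fun z : EuclideanSpace ℝ (Fin n) => (‖z‖^2)^(β/2) • z) = psi n β :=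
    funext fun z => by rw [psi, e z]
  change HasFDerivAt (fun z : EuclideanSpace ℝ (Fin n) => (‖z‖^2)^(β/2) • z) _ y at h3
  rw [hfun] at h3
  have hD : ((‖y‖:ℝ)^2)^(β/2) • ContinuousLinearMap.id ℝ (EuclideanSpace ℝ (Fin n)) +
      ((β/2 * (‖y‖^2)^(β/2-1)) • (2 • innerSL ℝ y)).smulRight y = Dmap n β y := by
    have hsc : ((β/2 * ‖y‖^(β-2)) • (2 • (innerSL ℝ y))) = (β * ‖y‖^(β-2)) • innerSL ℝ y :=
      ContinuousLinearMap.ext fun v => by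
        simp only [ContinuousLinearMap.smul_apply, smul_eq_mul, nsmul_eq_mul, Nat.cast_ofNat]
        ring
    rw [Dmap, e y, e2, hsc]
  rw [hD] at h3
  exact h3

lemma det_Dmap (n : ℕ) (β : ℝ) {y : EuclideanSpace ℝ (Fin n)} (hy : y ≠ 0) :
    (Dmap n β y).det = (1 + β) * ‖y‖ ^ (β * n) := by
  classical
  have hy0 : (0:ℝ) < ‖y‖ := norm_pos_iff.2 hy
  set b := (EuclideanSpace.basisFun (Fin n) ℝ).toBasis with hb
  have hdet : (Dmap n β y).det = (LinearMap.toMatrix b b (Dmap n β y)).det := by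
    rw [LinearMap.det_toMatrix]
  have hM : LinearMap.toMatrix b b (Dmap n β y) =
      ‖y‖ ^ β • (1 + Matrix.replicateCol (Fin 1) (fun i => (β / ‖y‖^2) * y i) *
        Matrix.replicateRow (Fin 1) (fun i => y i)) := by
    ext i j
    rw [LinearMap.toMatrix_apply]
    have hbj : b j = EuclideanSpace.single j 1 := by
      rw [hb, OrthonormalBasis.coe_toBasis, EuclideanSpace.basisFun_apply]
    have hrepr : ∀ z : EuclideanSpace ℝ (Fin n), b.repr z i = z i := fun z => by
      rw [hb, OrthonormalBasis.coe_toBasis_repr_apply, EuclideanSpace.basisFun_repr]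
    rw [ContinuousLinearMap.coe_coe, hbj, hrepr, Dmap_apply]
    have hinner : (inner ℝ y (EuclideanSpace.single j (1:ℝ)) : ℝ) = y j := by
      rw [EuclideanSpace.inner_single_right]; simp
    rw [hinner]
    simp only [PiLp.add_apply, PiLp.smul_apply, smul_eq_mul,
      EuclideanSpace.single_apply, Matrix.smul_apply, Matrix.add_apply, Matrix.one_apply,
      Matrix.mul_apply, Finset.sum_fin_eq_sum_range, Matrix.replicateCol_apply, Matrix.replicateRow_apply,
      smul_eq_mul]
    rw [Finset.sum_range_one]
    simp only [dif_pos (by norm_num : (0:ℕ) < 1)]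
    have hsplit : ‖y‖ ^ (β-2) = ‖y‖ ^ β / ‖y‖^2 := by
      rw [Real.rpow_sub hy0, Real.rpow_two]
    by_cases hij : j = i
    · subst hij; simp only [if_pos rfl]
      rw [hsplit]; field_simp
    · simp only [if_neg hij, if_neg (Ne.symm hij)]
      rw [hsplit]; field_simp
  rw [hdet, hM, Matrix.det_smul, show Matrix.det ((1 : Matrix (Fin n) (Fin n) ℝ) + Matrix.replicateCol (Fin 1) (fun i => (β / ‖y‖^2) * y i) *
      Matrix.replicateRow (Fin 1) (fun i => y i)) =
      1 + dotProduct (fun i => y i) (fun i => (β / ‖y‖^2) * y i) from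
    Matrix.det_one_add_replicateCol_mul_replicateRow _ _]
  have hdot : dotProduct (fun i => y i) (fun i => (β / ‖y‖^2) * y i) = β := by
    have hnorm : ∑ i, y i * y i = ‖y‖^2 := by
      have h := real_inner_self_eq_norm_sq y
      rw [PiLp.inner_apply] at h
      simpa [← pow_two] using h
    simp only [dotProduct]
    rw [Finset.sum_congr rfl (fun i _ => by ring : ∀ i ∈ Finset.univ,
      y i * (β / ‖y‖^2 * y i) = (β / ‖y‖^2) * (y i * y i)), ← Finset.mul_sum, hnorm]
    field_simp
  rw [hdot]
  have hcard : (Fintype.card (Fin n)) = n := Fintype.card_fin n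
  rw [hcard]
  have : (‖y‖ ^ β) ^ n = ‖y‖ ^ (β * n) := by
    rw [← Real.rpow_natCast (‖y‖ ^ β) n, ← Real.rpow_mul (norm_nonneg y)]
  rw [this]; ring

lemma norm_Dmap_le (n : ℕ) {β : ℝ} (hβ : 0 ≤ β) {y : EuclideanSpace ℝ (Fin n)} (hy : y ≠ 0) :
    ‖Dmap n β y‖ ≤ (1 + β) * ‖y‖ ^ β := by
  have hy0 : (0:ℝ) < ‖y‖ := norm_pos_iff.2 hy
  have hrp : (0:ℝ) ≤ ‖y‖ ^ β := Real.rpow_nonneg (norm_nonneg y) β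
  refine ContinuousLinearMap.opNorm_le_bound _ (by positivity) fun v => ?_
  rw [Dmap_apply]
  refine (norm_add_le _ _).trans ?_
  rw [norm_smul, norm_smul]
  have key : ‖y‖ ^ (β-2) * (‖y‖ * ‖y‖) = ‖y‖ ^ β := by
    have h2 : (‖y‖:ℝ) ^ (2:ℝ) = ‖y‖ * ‖y‖ := by
      rw [Real.rpow_two, pow_two]
    rw [← h2, ← Real.rpow_add hy0]
    norm_num
  have hinner : |(inner ℝ y v : ℝ)| ≤ ‖y‖ * ‖v‖ := abs_real_inner_le_norm y v
  have h1 : ‖(‖y‖ ^ β : ℝ)‖ = ‖y‖ ^ β := by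
    rw [Real.norm_eq_abs, abs_of_nonneg hrp]
  have hc : (0:ℝ) ≤ β * ‖y‖ ^ (β-2) :=
    mul_nonneg hβ (Real.rpow_nonneg (norm_nonneg y) _)
  have h2 : ‖(β * ‖y‖ ^ (β-2) * (inner ℝ y v : ℝ))‖ ≤ β * ‖y‖ ^ (β-2) * (‖y‖ * ‖v‖) := by
    rw [Real.norm_eq_abs, abs_mul, abs_of_nonneg hc]
    exact mul_le_mul_of_nonneg_left hinner hc
  rw [h1]
  have h3 := mul_le_mul_of_nonneg_right h2 (norm_nonneg y)
  have key2 : β * ‖y‖ ^ (β-2) * (‖y‖ * ‖v‖) * ‖y‖ = β * (‖y‖^β) * ‖v‖ := by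
    rw [← key]; ring
  have expand : (1+β) * ‖y‖^β * ‖v‖ = ‖y‖^β * ‖v‖ + β * (‖y‖^β) * ‖v‖ := by ring
  linarith [h3]

lemma contDiffAt_psi (n : ℕ) (β : ℝ) {y : EuclideanSpace ℝ (Fin n)} (hy : y ≠ 0) :
    ContDiffAt ℝ (⊤ : ℕ∞) (psi n β) y := by
  have hsq : (‖y‖:ℝ)^2 ≠ 0 := pow_ne_zero 2 (norm_ne_zero_iff.2 hy)
  have e : ∀ z : EuclideanSpace ℝ (Fin n), ((‖z‖:ℝ)^2)^(β/2) = ‖z‖^β := fun z => by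
    rw [← Real.rpow_natCast ‖z‖ 2, ← Real.rpow_mul (norm_nonneg z)]
    congr 1; ring
  have hfun : (fun z : EuclideanSpace ℝ (Fin n) => (‖z‖^2)^(β/2) • z) = psi n β :=
    funext fun z => by rw [psi, e z]
  rw [← hfun]
  have h1 : ContDiffAt ℝ (⊤ : ℕ∞) (fun z : EuclideanSpace ℝ (Fin n) => (‖z‖^2)^(β/2)) y :=
    (Real.contDiffAt_rpow_const_of_ne hsq).comp y (contDiff_norm_sq ℝ).contDiffAt
  exact h1.smul contDiffAt_id

lemma continuous_psi (n : ℕ) {β : ℝ} (hβ : 0 < β) : Continuous (psi n β) :=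
  (continuous_norm.rpow_const fun z => Or.inr hβ.le).smul continuous_id

end CKN

/-- if the Gagliardo–Nirenberg inequality holds with constant `M`, then
for `-1 < α < 0` the Caffarelli–Kohn–Nirenberg inequality holds with constant
`(1+α)^(t/n - t) * M` for all smooth compactly supported `f` vanishing near `0`. -/
theorem stmt14 (n : ℕ) (p s r t M : ℝ)
    (hn : 1 ≤ n) (hp : 1 ≤ p) (hpn : p < n)
    (ht0 : 0 ≤ t) (ht1 : t ≤ 1)
    (hr : 1 / r = (1 - t) / s + t * (n - p) / (n * p))
    (hGN : ∀ f : EuclideanSpace ℝ (Fin n) → ℝ,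
      ContDiff ℝ (⊤ : ℕ∞) f → HasCompactSupport f →
      (∫ x, |f x| ^ r) ^ (1 / r) ≤
        M * (∫ x, |f x| ^ s) ^ ((1 - t) / s) *
          (∫ x, ‖fderiv ℝ f x‖ ^ p) ^ (t / p)) :
    ∀ α : ℝ, -1 < α → α < 0 →
      ∀ f : EuclideanSpace ℝ (Fin n) → ℝ,
        ContDiff ℝ (⊤ : ℕ∞) f → HasCompactSupport f → (0 : EuclideanSpace ℝ (Fin n)) ∉ tsupport f →
        (∫ x, |f x| ^ r * ‖x‖ ^ (α * n)) ^ (1 / r) ≤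
          (1 + α) ^ (t / n - t) * M *
            (∫ x, |f x| ^ s * ‖x‖ ^ (α * n)) ^ ((1 - t) / s) *
            (∫ x, ‖fderiv ℝ f x‖ ^ p * ‖x‖ ^ (α * (n - p))) ^ (t / p) := by
  intro α hα1 hα0 f hf hfc hf0
  have hα : (0:ℝ) < 1 + α := by linarith
  have hnpos : (0:ℝ) < n := by exact_mod_cast Nat.lt_of_lt_of_le Nat.zero_lt_one hn
  have hn0 : (n:ℝ) ≠ 0 := hnpos.ne'
  have hp0 : (0:ℝ) < p := lt_of_lt_of_le one_pos hp
  set β : ℝ := -α / (1 + α) with hβdef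
  have hβ : 0 < β := div_pos (by linarith) hα
  set c : ℝ := 1 + β with hcdef
  have hc : (0:ℝ) < c := by rw [hcdef]; linarith
  have hcinv : c = (1+α)⁻¹ := by rw [hcdef, hβdef]; field_simp; ring
  have hβα : (β + 1) * α = -β := by rw [hβdef]; field_simp; ring
  haveI : Nonempty (Fin n) := ⟨⟨0, hn⟩⟩
  haveI : Nontrivial (EuclideanSpace ℝ (Fin n)) := by
    refine ⟨⟨EuclideanSpace.single ⟨0, hn⟩ (1:ℝ), 0, fun h => ?_⟩⟩
    have h0 := congrArg (fun v : EuclideanSpace ℝ (Fin n) => v ⟨0, hn⟩) h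
    simp [EuclideanSpace.single_apply] at h0
  set ψ := CKN.psi n β with hψdef
  set g : EuclideanSpace ℝ (Fin n) → ℝ := fun y => f (ψ y) with hgdef
  set S : Set (EuclideanSpace ℝ (Fin n)) := {(0 : EuclideanSpace ℝ (Fin n))}ᶜ with hSdef
  have hs : MeasurableSet S := (measurableSet_singleton _).compl
  -- change of variables
  have key : ∀ h : EuclideanSpace ℝ (Fin n) → ℝ,
      ∫ x, h x = ∫ y in S, |(CKN.Dmap n β y).det| • h (ψ y) := by
    intro h
    calc ∫ x, h x = ∫ x in S, h x := by
          rw [hSdef, restrict_compl_singleton]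
      _ = ∫ x in ψ '' S, h x := by rw [hψdef, hSdef, CKN.image_psi n hβ]
      _ = ∫ y in S, |(CKN.Dmap n β y).det| • h (ψ y) :=
          integral_image_eq_integral_abs_det_fderiv_smul volume hs
            (fun y hy => (CKN.hasFDerivAt_psi n β hy).hasFDerivWithinAt)
            (CKN.injOn_psi n hβ) h
  -- generic transform
  have transform : ∀ (A : EuclideanSpace ℝ (Fin n) → ℝ) (e d : ℝ),
      (β * n + (β + 1) * e = d) →
      (∫ x, A x * ‖x‖ ^ e) = c * ∫ y in S, A (ψ y) * ‖y‖ ^ d := by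
    intro A e d hd
    rw [key (fun x => A x * ‖x‖ ^ e)]
    rw [← integral_const_mul]
    apply setIntegral_congr_fun hs
    intro y hy
    have hy0 : y ≠ 0 := hy
    have hypos : (0:ℝ) < ‖y‖ := norm_pos_iff.2 hy0
    have hdetpos : (0:ℝ) < (1 + β) * ‖y‖ ^ (β * (n:ℝ)) := by positivity
    simp only [smul_eq_mul]
    rw [CKN.det_Dmap n β hy0, abs_of_pos hdetpos, hψdef, CKN.norm_psi n hβ,
      show ((‖y‖ ^ (β+1) : ℝ)) ^ e = ‖y‖ ^ ((β+1) * e) from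
        (Real.rpow_mul (norm_nonneg y) _ _).symm]
    have hmul : ‖y‖ ^ (β * (n:ℝ)) * ‖y‖ ^ ((β+1) * e) = ‖y‖ ^ d := by
      rw [← Real.rpow_add hypos, hd]
    rw [← hmul]; ring
  -- the three transformed integrals
  have hexp_r : β * (n:ℝ) + (β + 1) * (α * n) = 0 := by
    rw [show (β+1) * (α * (n:ℝ)) = ((β+1) * α) * n by ring, hβα]; ring
  have hexp_p : β * (n:ℝ) + (β + 1) * (α * ((n:ℝ) - p)) = β * p := by
    rw [show (β+1) * (α * ((n:ℝ) - p)) = ((β+1) * α) * ((n:ℝ) - p) by ring, hβα]; ring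
  have hIr : (∫ x, |f x| ^ r * ‖x‖ ^ (α * n)) = c * ∫ y, |g y| ^ r := by
    rw [transform (fun x => |f x| ^ r) (α * n) 0 hexp_r]
    congr 1
    rw [hSdef, restrict_compl_singleton]
    simp only [Real.rpow_zero, mul_one, hgdef]
  have hIs : (∫ x, |f x| ^ s * ‖x‖ ^ (α * n)) = c * ∫ y, |g y| ^ s := by
    rw [transform (fun x => |f x| ^ s) (α * n) 0 hexp_r]
    congr 1
    rw [hSdef, restrict_compl_singleton]
    simp only [Real.rpow_zero, mul_one, hgdef]
  have hIp : (∫ x, ‖fderiv ℝ f x‖ ^ p * ‖x‖ ^ (α * ((n:ℝ) - p)))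
      = c * ∫ y in S, ‖fderiv ℝ f (ψ y)‖ ^ p * ‖y‖ ^ (β * p) :=
    transform (fun x => ‖fderiv ℝ f x‖ ^ p) (α * ((n:ℝ) - p)) (β * p) hexp_p
  -- support facts
  obtain ⟨b, hb0, hbsub⟩ := hfc.isBounded.subset_closedBall_lt 0 0
  set R : ℝ := b ^ (1/(β+1)) with hRdef
  have hRpow : R ^ (β + 1) = b := by
    rw [hRdef, ← Real.rpow_mul hb0.le]
    rw [show 1/(β+1) * (β+1) = 1 by field_simp]
    exact Real.rpow_one b
  have hψlarge : ∀ y : EuclideanSpace ℝ (Fin n), R < ‖y‖ → ψ y ∉ tsupport f := by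
    intro y hy hmem
    have h1 : ‖ψ y‖ ≤ b := by
      have := hbsub hmem
      simpa [Metric.mem_closedBall, dist_zero_right] using this
    rw [hψdef, CKN.norm_psi n hβ] at h1
    have h2 : R ^ (β+1) < ‖y‖ ^ (β+1) :=
      Real.rpow_lt_rpow (Real.rpow_nonneg hb0.le _) hy (by linarith)
    rw [hRpow] at h2
    linarith
  have hgc : HasCompactSupport g := by
    apply HasCompactSupport.intro (isCompact_closedBall (0 : EuclideanSpace ℝ (Fin n)) R)
    intro y hy
    have hylarge : R < ‖y‖ := by
      simpa [Metric.mem_closedBall, dist_zero_right, not_le] using hy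
    show f (ψ y) = 0
    exact image_eq_zero_of_notMem_tsupport (hψlarge y hylarge)
  -- f vanishes near 0
  obtain ⟨a, ha0, hball⟩ := Metric.isOpen_iff.1 (isClosed_tsupport f).isOpen_compl 0 hf0
  have hfzero : ∀ x : EuclideanSpace ℝ (Fin n), ‖x‖ < a → f x = 0 := fun x hx =>
    image_eq_zero_of_notMem_tsupport (hball (by simpa [Metric.mem_ball, dist_zero_right] using hx))
  have hψcont : Continuous ψ := CKN.continuous_psi n hβ
  -- smoothness of g
  have hgsmooth : ContDiff ℝ (⊤ : ℕ∞) g := by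
    rw [contDiff_iff_contDiffAt]
    intro y
    rcases eq_or_ne y 0 with rfl | hy
    · have hmem : ψ ⁻¹' (Metric.ball 0 a) ∈ nhds (0 : EuclideanSpace ℝ (Fin n)) := by
        apply hψcont.continuousAt.preimage_mem_nhds
        rw [hψdef, CKN.psi_zero n hβ.ne']
        exact Metric.ball_mem_nhds _ ha0
      have heq : g =ᶠ[nhds (0 : EuclideanSpace ℝ (Fin n))] (fun _ => (0:ℝ)) := by
        filter_upwards [hmem] with y hy
        exact hfzero _ (by simpa [Metric.mem_ball, dist_zero_right] using hy)
      exact (contDiffAt_const (c := (0:ℝ))).congr_of_eventuallyEq heq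
    · exact (hf.contDiffAt).comp y (CKN.contDiffAt_psi n β hy)
  -- gradient bound
  have hfd : Differentiable ℝ f := hf.differentiable (by simp)
  have hgrad : ∀ y : EuclideanSpace ℝ (Fin n), y ≠ 0 →
      fderiv ℝ g y = (fderiv ℝ f (ψ y)).comp (CKN.Dmap n β y) := fun y hy =>
    ((hfd (ψ y)).hasFDerivAt.comp y (CKN.hasFDerivAt_psi n β hy)).fderiv
  have hgradle : ∀ y : EuclideanSpace ℝ (Fin n), y ≠ 0 →
      ‖fderiv ℝ g y‖ ≤ c * ‖y‖ ^ β * ‖fderiv ℝ f (ψ y)‖ := by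
    intro y hy
    rw [hgrad y hy]
    refine (ContinuousLinearMap.opNorm_comp_le _ _).trans ?_
    rw [mul_comm (c * ‖y‖ ^ β) ‖fderiv ℝ f (ψ y)‖]
    exact mul_le_mul_of_nonneg_left (hcdef ▸ CKN.norm_Dmap_le n hβ.le hy) (norm_nonneg _)
  -- dominating function
  set k : EuclideanSpace ℝ (Fin n) → ℝ :=
    fun y => (c * ‖y‖ ^ β * ‖fderiv ℝ f (ψ y)‖) ^ p with hkdef
  have hkcont : Continuous k := by
    apply Continuous.rpow_const
    · exact (continuous_const.mul (continuous_norm.rpow_const fun y => Or.inr hβ.le)).mul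
        (((hf.continuous_fderiv (by simp)).comp hψcont).norm)
    · exact fun y => Or.inr hp0.le
  have hfderiv_zero : ∀ y : EuclideanSpace ℝ (Fin n), R < ‖y‖ → fderiv ℝ f (ψ y) = 0 := by
    intro y hy
    by_contra hne
    exact hψlarge y hy (support_fderiv_subset ℝ (by simpa [Function.mem_support] using hne))
  have hksupp : HasCompactSupport k := by
    apply HasCompactSupport.intro (isCompact_closedBall (0 : EuclideanSpace ℝ (Fin n)) R)
    intro y hy
    have hylarge : R < ‖y‖ := by
      simpa [Metric.mem_closedBall, dist_zero_right, not_le] using hy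
    rw [hkdef]
    simp only [hfderiv_zero y hylarge, norm_zero, mul_zero]
    exact Real.zero_rpow hp0.ne'
  have hkint : Integrable k := hkcont.integrable_of_hasCompactSupport hksupp
  have hae : ∀ᵐ y : EuclideanSpace ℝ (Fin n) ∂volume, y ≠ 0 := by
    have := (Set.countable_singleton (0 : EuclideanSpace ℝ (Fin n))).ae_notMem volume
    filter_upwards [this] with y hy
    simpa using hy
  have hJple : (∫ y, ‖fderiv ℝ g y‖ ^ p) ≤ ∫ y, k y := by
    refine integral_mono_of_nonneg
      (Filter.Eventually.of_forall fun y => Real.rpow_nonneg (norm_nonneg _) _) hkint ?_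
    filter_upwards [hae] with y hy
    exact Real.rpow_le_rpow (norm_nonneg _) (hgradle y hy) hp0.le
  have hkeq : (∫ y, k y) = c ^ p * ∫ y in S, ‖fderiv ℝ f (ψ y)‖ ^ p * ‖y‖ ^ (β * p) := by
    calc ∫ y, k y = ∫ y in S, k y := by rw [hSdef, restrict_compl_singleton]
      _ = ∫ y in S, c ^ p * (‖fderiv ℝ f (ψ y)‖ ^ p * ‖y‖ ^ (β * p)) := by
          apply setIntegral_congr_fun hs
          intro y hy
          have hy0 : y ≠ 0 := hy
          simp only [hkdef]
          rw [Real.mul_rpow (mul_nonneg hc.le (Real.rpow_nonneg (norm_nonneg _) _))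
            (norm_nonneg _), Real.mul_rpow hc.le (Real.rpow_nonneg (norm_nonneg _) _),
            ← Real.rpow_mul (norm_nonneg y)]
          ring
      _ = c ^ p * ∫ y in S, ‖fderiv ℝ f (ψ y)‖ ^ p * ‖y‖ ^ (β * p) := integral_const_mul _ _
  -- nonnegativity of the various integrals
  have hJr0 : (0:ℝ) ≤ ∫ y, |g y| ^ r :=
    integral_nonneg fun y => Real.rpow_nonneg (abs_nonneg _) _
  have hJs0 : (0:ℝ) ≤ ∫ y, |g y| ^ s :=
    integral_nonneg fun y => Real.rpow_nonneg (abs_nonneg _) _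
  have hJp0 : (0:ℝ) ≤ ∫ y, ‖fderiv ℝ g y‖ ^ p :=
    integral_nonneg fun y => Real.rpow_nonneg (norm_nonneg _) _
  have hSp0 : (0:ℝ) ≤ ∫ y in S, ‖fderiv ℝ f (ψ y)‖ ^ p * ‖y‖ ^ (β * p) :=
    integral_nonneg fun y => mul_nonneg (Real.rpow_nonneg (norm_nonneg _) _)
      (Real.rpow_nonneg (norm_nonneg _) _)
  have hIs0 : (0:ℝ) ≤ ∫ x, |f x| ^ s * ‖x‖ ^ (α * n) :=
    integral_nonneg fun x => mul_nonneg (Real.rpow_nonneg (abs_nonneg _) _)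
      (Real.rpow_nonneg (norm_nonneg _) _)
  have hIp0 : (0:ℝ) ≤ ∫ x, ‖fderiv ℝ f x‖ ^ p * ‖x‖ ^ (α * ((n:ℝ) - p)) :=
    integral_nonneg fun x => mul_nonneg (Real.rpow_nonneg (norm_nonneg _) _)
      (Real.rpow_nonneg (norm_nonneg _) _)
  have hGNg := hGN g hgsmooth hgc
  -- bound on the gradient integral
  have hJple2 : (∫ y, ‖fderiv ℝ g y‖ ^ p) ≤
      c ^ ((p:ℝ) - 1) * ∫ x, ‖fderiv ℝ f x‖ ^ p * ‖x‖ ^ (α * ((n:ℝ) - p)) := by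
    have hcc : c ^ ((p:ℝ) - 1) * (c * ∫ y in S, ‖fderiv ℝ f (ψ y)‖ ^ p * ‖y‖ ^ (β * p))
        = c ^ p * ∫ y in S, ‖fderiv ℝ f (ψ y)‖ ^ p * ‖y‖ ^ (β * p) := by
      rw [Real.rpow_sub hc, Real.rpow_one]
      field_simp
    rw [hIp, hcc, ← hkeq]
    exact hJple
  rcases le_or_gt 0 M with hM | hM
  · -- main case : M ≥ 0
    have step1 : (∫ x, |f x| ^ r * ‖x‖ ^ (α * n)) ^ (1/r)
        = c ^ (1/r) * (∫ y, |g y| ^ r) ^ (1/r) := by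
      rw [hIr, Real.mul_rpow hc.le hJr0]
    have step2 : c ^ (1/r) * (∫ y, |g y| ^ r) ^ (1/r) ≤
        c ^ (1/r) * (M * (∫ y, |g y| ^ s) ^ ((1-t)/s) * (∫ y, ‖fderiv ℝ g y‖ ^ p) ^ (t/p)) :=
      mul_le_mul_of_nonneg_left hGNg (Real.rpow_nonneg hc.le _)
    have step3 : (∫ y, ‖fderiv ℝ g y‖ ^ p) ^ (t/p) ≤
        (c ^ ((p:ℝ) - 1) * ∫ x, ‖fderiv ℝ f x‖ ^ p * ‖x‖ ^ (α * ((n:ℝ) - p))) ^ (t/p) :=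
      Real.rpow_le_rpow hJp0 hJple2 (div_nonneg ht0 hp0.le)
    have step4 : M * (∫ y, |g y| ^ s) ^ ((1-t)/s) * (∫ y, ‖fderiv ℝ g y‖ ^ p) ^ (t/p) ≤
        M * (∫ y, |g y| ^ s) ^ ((1-t)/s) *
          (c ^ ((p:ℝ) - 1) * ∫ x, ‖fderiv ℝ f x‖ ^ p * ‖x‖ ^ (α * ((n:ℝ) - p))) ^ (t/p) :=
      mul_le_mul_of_nonneg_left step3 (mul_nonneg hM (Real.rpow_nonneg hJs0 _))
    have hJs_eq : (∫ y, |g y| ^ s) = c⁻¹ * ∫ x, |f x| ^ s * ‖x‖ ^ (α * n) := by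
      rw [hIs]; field_simp
    -- final constant computation
    have hK : c ^ (1/r) * (c ^ (-1 * ((1-t)/s)) * c ^ (((p:ℝ)-1) * (t/p)))
        = (1+α) ^ (t/n - t) := by
      rw [← Real.rpow_add hc, ← Real.rpow_add hc, hcinv, Real.inv_rpow hα.le,
        ← Real.rpow_neg hα.le]
      congr 1
      rw [hr]
      field_simp
      ring
    have hfinal : c ^ (1/r) * (M * (c⁻¹ * ∫ x, |f x| ^ s * ‖x‖ ^ (α * n)) ^ ((1-t)/s) *
        (c ^ ((p:ℝ) - 1) * ∫ x, ‖fderiv ℝ f x‖ ^ p * ‖x‖ ^ (α * ((n:ℝ) - p))) ^ (t/p))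
        = (1 + α) ^ (t / n - t) * M *
            (∫ x, |f x| ^ s * ‖x‖ ^ (α * n)) ^ ((1 - t) / s) *
            (∫ x, ‖fderiv ℝ f x‖ ^ p * ‖x‖ ^ (α * ((n:ℝ) - p))) ^ (t / p) := by
      rw [Real.mul_rpow (inv_nonneg.2 hc.le) hIs0,
        Real.mul_rpow (Real.rpow_nonneg hc.le _) hIp0,
        ← Real.rpow_neg_one c, ← Real.rpow_mul hc.le, ← Real.rpow_mul hc.le]
      linear_combination (M * (∫ x, |f x| ^ s * ‖x‖ ^ (α * n)) ^ ((1-t)/s) *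
        (∫ x, ‖fderiv ℝ f x‖ ^ p * ‖x‖ ^ (α * ((n:ℝ) - p))) ^ (t/p)) * hK
    calc (∫ x, |f x| ^ r * ‖x‖ ^ (α * n)) ^ (1/r)
        = c ^ (1/r) * (∫ y, |g y| ^ r) ^ (1/r) := step1
      _ ≤ c ^ (1/r) * (M * (∫ y, |g y| ^ s) ^ ((1-t)/s) *
            (∫ y, ‖fderiv ℝ g y‖ ^ p) ^ (t/p)) := step2
      _ ≤ c ^ (1/r) * (M * (∫ y, |g y| ^ s) ^ ((1-t)/s) *
            (c ^ ((p:ℝ) - 1) * ∫ x, ‖fderiv ℝ f x‖ ^ p * ‖x‖ ^ (α * ((n:ℝ) - p))) ^ (t/p)) :=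
          mul_le_mul_of_nonneg_left step4 (Real.rpow_nonneg hc.le _)
      _ = (1 + α) ^ (t / n - t) * M *
            (∫ x, |f x| ^ s * ‖x‖ ^ (α * n)) ^ ((1 - t) / s) *
            (∫ x, ‖fderiv ℝ f x‖ ^ p * ‖x‖ ^ (α * ((n:ℝ) - p))) ^ (t / p) := by
          rw [hJs_eq]
          exact hfinal
  · -- degenerate case : M < 0
    have hAB0 : (∫ y, |g y| ^ s) ^ ((1-t)/s) * (∫ y, ‖fderiv ℝ g y‖ ^ p) ^ (t/p) = 0 := by
      have hABnn : (0:ℝ) ≤ (∫ y, |g y| ^ s) ^ ((1-t)/s) * (∫ y, ‖fderiv ℝ g y‖ ^ p) ^ (t/p) :=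
        mul_nonneg (Real.rpow_nonneg hJs0 _) (Real.rpow_nonneg hJp0 _)
      have hLnn : (0:ℝ) ≤ (∫ y, |g y| ^ r) ^ (1/r) := Real.rpow_nonneg hJr0 _
      have hRHSle : M * (∫ y, |g y| ^ s) ^ ((1-t)/s) * (∫ y, ‖fderiv ℝ g y‖ ^ p) ^ (t/p) ≤ 0 := by
        rw [mul_assoc]
        exact mul_nonpos_of_nonpos_of_nonneg hM.le hABnn
      have h0 : M * ((∫ y, |g y| ^ s) ^ ((1-t)/s) * (∫ y, ‖fderiv ℝ g y‖ ^ p) ^ (t/p)) = 0 := by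
        rw [← mul_assoc]
        linarith [hGNg]
      rcases mul_eq_zero.1 h0 with h | h
      · exact absurd h hM.ne
      · exact h
    have hr0 : 1/r ≠ 0 := by
      intro h0
      rw [h0, Real.rpow_zero] at hGNg
      have : M * (∫ y, |g y| ^ s) ^ ((1-t)/s) * (∫ y, ‖fderiv ℝ g y‖ ^ p) ^ (t/p) ≤ 0 := by
        rw [mul_assoc]
        exact mul_nonpos_of_nonpos_of_nonneg hM.le
          (mul_nonneg (Real.rpow_nonneg hJs0 _) (Real.rpow_nonneg hJp0 _))
      linarith
    have hJr_zero : (∫ y, |g y| ^ r) = 0 := by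
      have hle : (∫ y, |g y| ^ r) ^ (1/r) ≤ 0 := by
        refine hGNg.trans ?_
        rw [mul_assoc, hAB0, mul_zero]
      have := Real.rpow_nonneg hJr0 (1/r)
      have heq : (∫ y, |g y| ^ r) ^ (1/r) = 0 := le_antisymm hle this
      exact ((Real.rpow_eq_zero_iff_of_nonneg hJr0).1 heq).1
    have hLHS : (∫ x, |f x| ^ r * ‖x‖ ^ (α * n)) ^ (1/r) = 0 := by
      rw [hIr, hJr_zero, mul_zero]
      exact Real.zero_rpow hr0
    rw [hLHS]
    -- show RHS is zero
    rcases mul_eq_zero.1 hAB0 with hA | hB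
    · -- ∫ |g|^s = 0 case
      obtain ⟨hJs_zero, hes⟩ := (Real.rpow_eq_zero_iff_of_nonneg hJs0).1 hA
      have hIs_zero : (∫ x, |f x| ^ s * ‖x‖ ^ (α * n)) = 0 := by
        rw [hIs, hJs_zero, mul_zero]
      rw [hIs_zero, Real.zero_rpow hes]
      simp
    · -- gradient of g vanishes : f ≡ 0
      obtain ⟨hJp_zero, hep⟩ := (Real.rpow_eq_zero_iff_of_nonneg hJp0).1 hB
      have hgcont' : Continuous (fun y => ‖fderiv ℝ g y‖ ^ p) :=
        ((hgsmooth.continuous_fderiv (by simp)).norm).rpow_const (fun _ => Or.inr hp0.le)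
      have hgsupp' : HasCompactSupport (fun y => ‖fderiv ℝ g y‖ ^ p) := by
        apply HasCompactSupport.intro hgc
        intro y hy
        have : fderiv ℝ g y = 0 := by
          by_contra hne
          exact hy (tsupport_fderiv_subset ℝ (subset_closure (by
            simpa [Function.mem_support] using hne)))
        rw [this]
        simp [Real.zero_rpow hp0.ne']
      have hgint : Integrable (fun y => ‖fderiv ℝ g y‖ ^ p) :=
        hgcont'.integrable_of_hasCompactSupport hgsupp'
      have haezero : ∀ᵐ y : EuclideanSpace ℝ (Fin n) ∂volume, ‖fderiv ℝ g y‖ ^ p = 0 := by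
        have := (integral_eq_zero_iff_of_nonneg
          (fun y => Real.rpow_nonneg (norm_nonneg _) _) hgint).1 hJp_zero
        filter_upwards [this] with y hy using hy
      have hfderivzero : ∀ y, fderiv ℝ g y = 0 := by
        have hsupp_open : IsOpen (Function.support (fun y => ‖fderiv ℝ g y‖ ^ p)) := by
          rw [Function.support_eq_preimage]
          exact (isOpen_compl_singleton).preimage hgcont'
        have hmes : volume (Function.support (fun y => ‖fderiv ℝ g y‖ ^ p)) = 0 := by
          rw [Function.support]
          exact (ae_iff.1 haezero)
        have hempty : Function.support (fun y => ‖fderiv ℝ g y‖ ^ p) = ∅ := by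
          by_contra hne
          exact absurd hmes (hsupp_open.measure_pos volume
            (Set.nonempty_iff_ne_empty.2 hne)).ne'
        intro y
        have : ‖fderiv ℝ g y‖ ^ p = 0 := by
          by_contra hne
          exact absurd hempty (Set.nonempty_iff_ne_empty.1 ⟨y, hne⟩)
        have hnorm0 := ((Real.rpow_eq_zero_iff_of_nonneg (norm_nonneg _)).1 this).1
        exact norm_eq_zero.1 hnorm0
      have hg0val : g 0 = 0 := by
        rw [hgdef]
        simp only []
        rw [hψdef, CKN.psi_zero n hβ.ne']
        exact image_eq_zero_of_notMem_tsupport hf0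
      have hgzero : ∀ y, g y = 0 := fun y => by
        rw [is_const_of_fderiv_eq_zero (hgsmooth.differentiable (by simp)) hfderivzero y 0, hg0val]
      have hfzero' : ∀ x : EuclideanSpace ℝ (Fin n), f x = 0 := by
        intro x
        rcases eq_or_ne x 0 with rfl | hx
        · exact image_eq_zero_of_notMem_tsupport hf0
        · have hmem : x ∈ CKN.psi n β '' {(0 : EuclideanSpace ℝ (Fin n))}ᶜ := by
            rw [CKN.image_psi n hβ]
            exact hx
          obtain ⟨y, _, rfl⟩ := hmem
          exact hgzero y
      have hIp_zero : (∫ x, ‖fderiv ℝ f x‖ ^ p * ‖x‖ ^ (α * ((n:ℝ) - p))) = 0 := by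
        have hfconst : f = fun _ => (0:ℝ) := funext hfzero'
        rw [show (fun x => ‖fderiv ℝ f x‖ ^ p * ‖x‖ ^ (α * ((n:ℝ) - p)))
            = fun x : EuclideanSpace ℝ (Fin n) => (0:ℝ) from funext fun x => by
          rw [hfconst, fderiv_const_apply]
          simp [Real.zero_rpow hp0.ne']]
        exact integral_zero _ _
      rw [hIp_zero, Real.zero_rpow hep]
      simp
end
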